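/- Let 0 → ℤ/2 → G → A → 0 be a short exact sequence of abelian groups. The sequence splits if and only if every element g ∈ G whose image in A has order at most 2 itself has order at most 2. -/

import Mathlib

/-!
A retraction `G → ℤ/2` of `u` exists iff `u 1` is not a double: `G / 2G` is an `𝔽₂`-vector space,
and any nonzero vector in it is sent to `1` by some linear functional. By exactness, `u 1 = y + y`
happens exactly when some `y` with `2 h(y) = 0` has `2y ≠ 0`.
-/

theorem exists_addMonoidHom_zmod_two_apply_eq_one {G : Type*} [AddCommGroup G] {g : G}
    (hg : ∀ y : G, y + y ≠ g) : ∃ κ : G →+ ZMod 2, κ g = 1 := by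
  have hg₀ : ModN.mkQ 2 g ≠ 0 := by
    intro hzero
    obtain ⟨y, hy⟩ := (Submodule.Quotient.mk_eq_zero _).mp hzero
    exact hg y (by simpa [two_smul] using hy)
  obtain ⟨f, hf⟩ := Module.Projective.exists_dual_eq_one (ZMod 2) hg₀
  exact ⟨f.toAddMonoidHom.comp (ModN.mkQ 2), hf⟩

theorem exists_retraction_zmod_two_iff {G : Type*} [AddCommGroup G] (u : ZMod 2 →+ G) :
    (∃ κ : G →+ ZMod 2, ∀ x, κ (u x) = x) ↔ ∀ y : G, y + y ≠ u 1 := by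
  constructor
  · rintro ⟨κ, hκ⟩ y hy
    have := hκ 1
    rw [← hy, map_add, CharTwo.add_self_eq_zero] at this
    exact zero_ne_one this
  · intro hu
    obtain ⟨κ, hκ⟩ := exists_addMonoidHom_zmod_two_apply_eq_one hu
    refine ⟨κ, fun x => ?_⟩
    obtain rfl | rfl := (by decide : ∀ x : ZMod 2, x = 0 ∨ x = 1) x
    · simp
    · exact hκ

theorem forall_add_self_ne_iff_of_exact {G A : Type*} [AddCommGroup G] [AddCommGroup A]
    {u : ZMod 2 →+ G} {h : G →+ A} (hu : Function.Injective u) (hex : Function.Exact u h) :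
    (∀ y : G, y + y ≠ u 1) ↔ ∀ g : G, h g + h g = 0 → g + g = 0 := by
  constructor
  · intro hne g hg
    obtain ⟨x, hx⟩ := (hex (g + g)).mp (by rwa [map_add])
    obtain rfl | rfl := (by decide : ∀ x : ZMod 2, x = 0 ∨ x = 1) x
    · simpa using hx.symm
    · exact absurd hx.symm (hne g)
  · intro htwo y hy
    have hy₀ : y + y = 0 := htwo y (by rw [← map_add, hy]; exact hex.apply_apply_eq_zero 1)
    exact one_ne_zero (hu (by rw [← hy, hy₀, map_zero]))

theorem stmt_2_general {G A : Type*} [AddCommGroup G] [AddCommGroup A]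
    (u : ZMod 2 →+ G) (h : G →+ A)
    (hu : Function.Injective u)
    (hex : ∀ g : G, h g = 0 ↔ g ∈ u.range) :
    (∃ κ : G →+ ZMod 2, ∀ x : ZMod 2, κ (u x) = x) ↔
      (∀ g : G, h g + h g = 0 → g + g = 0) := by
  rw [exists_retraction_zmod_two_iff, forall_add_self_ne_iff_of_exact hu hex]

theorem stmt_2 {G A : Type*} [AddCommGroup G] [AddCommGroup A]
    (u : ZMod 2 →+ G) (h : G →+ A)
    (hu : Function.Injective u) (hh : Function.Surjective h)
    (hex : ∀ g : G, h g = 0 ↔ g ∈ u.range) :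
    (∃ κ : G →+ ZMod 2, ∀ x : ZMod 2, κ (u x) = x) ↔
      (∀ g : G, h g + h g = 0 → g + g = 0) :=
  stmt_2_general u h hu hex
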